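/- arXiv:0803.2100 — 2 statements merged into one kernel-verified Lean document; each statement's English description precedes it below -/
import Mathlib

section
/- Under the conditions min_{i} π_i ≥ π*_N > 0 with N·π*_N → ∞, the existence of κ ≥ 0 with N^{1/2+κ}(π*_N)^2 → ∞ and max_i ∑_{j≠i} (π_{ij} − π_i π_j)^2 = O(N^{−2κ}), and limsup_N N^{−1}∑_{i∈U_N} y_i^2 < ∞, the Horvitz–Thompson estimator ȳ_π = N^{−1}∑_{i∈U_N} y_i 1_{i∈s}/π_i satisfies E[(ȳ_π − ȳ_N)^2] → 0 as N → ∞. -/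
/-!
Write `ȳ_π - ȳ_N = ∑ᵢ wᵢ (1{i ∈ s} - πᵢ)` with `wᵢ = yᵢ / (N πᵢ)`, so that the mean squared error is
the quadratic form `∑ᵢ ∑ⱼ wᵢ wⱼ Δᵢⱼ`. With `N⁻¹ ∑ᵢ yᵢ² ≤ B`, its diagonal is at most `∑ᵢ wᵢ² πᵢ ≤ B / (N π*)`. By
Cauchy–Schwarz in each row, the off-diagonal part is at most
`(∑ᵢ |wᵢ|) · (∑ⱼ wⱼ²)^{1/2} · maxᵢ (∑_{j ≠ i} Δᵢⱼ²)^{1/2}`, and a second Cauchy–Schwarz gives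
`∑ᵢ |wᵢ| ≤ √B / π*`; altogether the off-diagonal part is `O(1 / (N^{1/2+κ} π*²))`.
-/

open MeasureTheory Finset Filter

lemma Set.indicator_sub_mul_indicator_sub {Ω : Type*} (A B : Set Ω) (a b : ℝ) :
    (fun ω => (A.indicator 1 ω - a) * (B.indicator 1 ω - b)) =
      fun ω => (A ∩ B).indicator 1 ω - b * A.indicator 1 ω - a * B.indicator 1 ω + a * b := by
  ext ω
  rw [Set.inter_indicator_one, Pi.mul_apply]
  ring

lemma Real.sqrt_mul_rpow_neg_div {x : ℝ} (hx : 0 < x) (C κ : ℝ) :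
    √(C * x ^ (-(2 * κ)) / x) = √C / x ^ (1 / 2 + κ) := by
  have hsq : (x ^ (1 / 2 + κ)) ^ 2 = x * x ^ (2 * κ) := by
    rw [← Real.rpow_natCast, ← Real.rpow_mul hx.le,
      show (1 / 2 + κ) * ((2 : ℕ) : ℝ) = 1 + 2 * κ by push_cast; ring, Real.rpow_add hx,
      Real.rpow_one]
  rw [mul_div_assoc, Real.sqrt_mul' C (by positivity), Real.rpow_neg hx.le, inv_div_left, ← hsq,
    Real.sqrt_inv, Real.sqrt_sq (by positivity)]
  exact (div_eq_mul_inv _ _).symm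

section Covariance

variable {Ω : Type*} [MeasurableSpace Ω] {μ : Measure Ω} {A B : Set Ω}

lemma integrable_indicator_one [IsFiniteMeasure μ] (hA : MeasurableSet A) :
    Integrable (A.indicator (1 : Ω → ℝ)) μ :=
  (integrable_const 1).indicator hA

lemma integrable_indicator_sub_mul_indicator_sub [IsFiniteMeasure μ] (hA : MeasurableSet A)
    (hB : MeasurableSet B) (a b : ℝ) :
    Integrable (fun ω => (A.indicator 1 ω - a) * (B.indicator 1 ω - b)) μ := by
  rw [Set.indicator_sub_mul_indicator_sub]
  exact (((integrable_indicator_one (hA.inter hB)).sub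
    ((integrable_indicator_one hA).const_mul b)).sub
    ((integrable_indicator_one hB).const_mul a)).add (integrable_const _)

lemma integral_indicator_sub_mul_indicator_sub [IsProbabilityMeasure μ] (hA : MeasurableSet A)
    (hB : MeasurableSet B) :
    ∫ ω, (A.indicator 1 ω - μ.real A) * (B.indicator 1 ω - μ.real B) ∂μ =
      μ.real (A ∩ B) - μ.real A * μ.real B := by
  have hAB := integrable_indicator_one (μ := μ) (hA.inter hB)
  have hA' := (integrable_indicator_one (μ := μ) hA).const_mul (μ.real B)
  have hB' := (integrable_indicator_one (μ := μ) hB).const_mul (μ.real A)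
  rw [Set.indicator_sub_mul_indicator_sub,
    integral_add (by exact (hAB.sub hA').sub hB') (integrable_const _),
    integral_sub (by exact hAB.sub hA') hB', integral_sub hAB hA', integral_const_mul,
    integral_const_mul, integral_indicator_one hA, integral_indicator_one hB,
    integral_indicator_one (hA.inter hB), integral_const, probReal_univ, smul_eq_mul]
  ring

lemma integral_sq_sum_indicator_sub [IsProbabilityMeasure μ] {ι : Type*} (U : Finset ι)
    {A : ι → Set Ω} (hA : ∀ i, MeasurableSet (A i)) (c : ι → ℝ) :
    ∫ ω, (∑ i ∈ U, c i * ((A i).indicator 1 ω - μ.real (A i))) ^ 2 ∂μ =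
      ∑ i ∈ U, ∑ j ∈ U, c i * c j * (μ.real (A i ∩ A j) - μ.real (A i) * μ.real (A j)) := by
  have hint (i j : ι) := (integrable_indicator_sub_mul_indicator_sub (μ := μ) (hA i) (hA j)
    (μ.real (A i)) (μ.real (A j))).const_mul (c i * c j)
  simp_rw [sq, sum_mul_sum, mul_mul_mul_comm (c _)]
  rw [integral_finsetSum _ fun i _ => integrable_finsetSum _ fun j _ => hint i j]
  refine sum_congr rfl fun i _ => ?_
  rw [integral_finsetSum _ fun j _ => hint i j]
  refine sum_congr rfl fun j _ => ?_
  rw [integral_const_mul, integral_indicator_sub_mul_indicator_sub (hA i) (hA j)]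

end Covariance

section QuadraticForm

variable {ι : Type*} [DecidableEq ι] {U : Finset ι}

lemma sum_sum_eq_sum_add_sum_sum_erase {M : Type*} [AddCommMonoid M] (f : ι → ι → M) :
    ∑ i ∈ U, ∑ j ∈ U, f i j = ∑ i ∈ U, f i i + ∑ i ∈ U, ∑ j ∈ U.erase i, f i j := by
  rw [← sum_add_distrib]
  exact sum_congr rfl fun i hi => (add_sum_erase U (f i) hi).symm

lemma sum_sum_erase_mul_le (c : ι → ℝ) (Δ : ι → ι → ℝ) {R : ℝ}
    (hR : ∀ i ∈ U, ∑ j ∈ U.erase i, Δ i j ^ 2 ≤ R) :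
    ∑ i ∈ U, ∑ j ∈ U.erase i, c i * c j * Δ i j ≤
      (∑ i ∈ U, |c i|) * (√(∑ j ∈ U, c j ^ 2) * √R) := by
  rw [sum_mul]
  refine sum_le_sum fun i hi => ?_
  have hrow : |∑ j ∈ U.erase i, c j * Δ i j| ≤ √(∑ j ∈ U, c j ^ 2) * √R :=
    calc _ ≤ √(∑ j ∈ U.erase i, c j ^ 2) * √(∑ j ∈ U.erase i, Δ i j ^ 2) := by
          rw [← Real.sqrt_mul (sum_nonneg fun _ _ => sq_nonneg _)]
          exact Real.abs_le_sqrt (sum_mul_sq_le_sq_mul_sq _ _ _)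
      _ ≤ _ := by
          gcongr
          · exact erase_subset i U
          · exact hR i hi
  calc ∑ j ∈ U.erase i, c i * c j * Δ i j = c i * ∑ j ∈ U.erase i, c j * Δ i j := by
        simp_rw [mul_sum, mul_assoc]
    _ ≤ |c i| * |∑ j ∈ U.erase i, c j * Δ i j| := by rw [← abs_mul]; exact le_abs_self _
    _ ≤ _ := mul_le_mul_of_nonneg_left hrow (abs_nonneg _)

end QuadraticForm

section HorvitzThompson

variable {ι : Type*} {U : Finset ι} {y π : ι → ℝ} {p B : ℝ}

noncomputable def htWeight (U : Finset ι) (y π : ι → ℝ) (i : ι) : ℝ := y i / (#U * π i)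

lemma horvitzThompson_sub_mean_eq [DecidableEq ι] {Ω : Type*} {s : Ω → Finset ι}
    (hπ0 : ∀ i ∈ U, π i ≠ 0) (ω : Ω) :
    (#U : ℝ)⁻¹ * ∑ i ∈ U, y i * (if i ∈ s ω then 1 else 0) / π i - (#U : ℝ)⁻¹ * ∑ i ∈ U, y i =
      ∑ i ∈ U, htWeight U y π i * ({ω | i ∈ s ω}.indicator 1 ω - π i) := by
  rw [mul_sum, mul_sum, ← sum_sub_distrib]
  refine sum_congr rfl fun i hi => ?_
  have := hπ0 i hi
  simp only [htWeight, Set.indicator_apply, Set.mem_ofPred_eq, Pi.one_apply]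
  rcases eq_or_ne (#U : ℝ) 0 with h | h <;> field_simp [h]

lemma sum_div_le_sum_div_of_le {f : ι → ℝ} (hf : ∀ i ∈ U, 0 ≤ f i) (hp : 0 < p)
    (hπ : ∀ i ∈ U, p ≤ π i) : ∑ i ∈ U, f i / π i ≤ (∑ i ∈ U, f i) / p := by
  rw [sum_div]
  exact sum_le_sum fun i hi => div_le_div_of_nonneg_left (hf i hi) hp (hπ i hi)

variable (hp : 0 < p) (hπ : ∀ i ∈ U, p ≤ π i) (hy : ∑ i ∈ U, y i ^ 2 ≤ #U * B)
include hp hπ hy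

lemma sum_htWeight_sq_mul_le : ∑ i ∈ U, htWeight U y π i ^ 2 * π i ≤ B / (#U * p) := by
  have hw (i) (hi : i ∈ U) : htWeight U y π i ^ 2 * π i = y i ^ 2 / #U ^ 2 / π i := by
    have := (hp.trans_le (hπ i hi)).ne'
    unfold htWeight; field_simp
  calc _ = ∑ i ∈ U, y i ^ 2 / #U ^ 2 / π i := sum_congr rfl hw
    _ ≤ (∑ i ∈ U, y i ^ 2 / #U ^ 2) / p :=
        sum_div_le_sum_div_of_le (fun _ _ => by positivity) hp hπ
    _ ≤ #U * B / #U ^ 2 / p := by rw [← sum_div]; gcongr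
    _ = B / (#U * p) := by rcases eq_or_ne (#U : ℝ) 0 with h | h <;> field_simp [h]

lemma sum_htWeight_sq_le : ∑ i ∈ U, htWeight U y π i ^ 2 ≤ B / (#U * p ^ 2) := by
  have hπ2 (i) (hi : i ∈ U) : p ^ 2 ≤ π i ^ 2 := pow_le_pow_left₀ hp.le (hπ i hi) 2
  calc _ = ∑ i ∈ U, y i ^ 2 / #U ^ 2 / π i ^ 2 := by
        refine sum_congr rfl fun i _ => ?_
        rw [htWeight, div_pow, mul_pow, div_div]
    _ ≤ (∑ i ∈ U, y i ^ 2 / #U ^ 2) / p ^ 2 :=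
        sum_div_le_sum_div_of_le (fun _ _ => by positivity) (by positivity) hπ2
    _ ≤ #U * B / #U ^ 2 / p ^ 2 := by rw [← sum_div]; gcongr
    _ = B / (#U * p ^ 2) := by rcases eq_or_ne (#U : ℝ) 0 with h | h <;> field_simp [h]

lemma sum_abs_htWeight_le : ∑ i ∈ U, |htWeight U y π i| ≤ √B / p := by
  rcases U.eq_empty_or_nonempty with rfl | hU
  · rw [sum_empty]; positivity
  have hn : (0 : ℝ) < #U := by exact_mod_cast hU.card_pos
  have hCS : ∑ i ∈ U, |y i| ≤ #U * √B :=
    calc _ ≤ √(#U * ∑ i ∈ U, |y i| ^ 2) :=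
          Real.le_sqrt_of_sq_le (sq_sum_le_card_mul_sum_sq (f := fun i => |y i|))
      _ ≤ √(#U * (#U * B)) := by simp_rw [sq_abs]; gcongr
      _ = #U * √B := by rw [← mul_assoc, ← sq, Real.sqrt_mul (sq_nonneg _), Real.sqrt_sq hn.le]
  calc _ = ∑ i ∈ U, |y i| / #U / π i := by
        refine sum_congr rfl fun i hi => ?_
        rw [htWeight, abs_div, abs_mul, Nat.abs_cast, abs_of_pos (hp.trans_le (hπ i hi)), div_div]
    _ ≤ (∑ i ∈ U, |y i| / #U) / p :=
        sum_div_le_sum_div_of_le (fun _ _ => by positivity) hp hπ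
    _ ≤ #U * √B / #U / p := by rw [← sum_div]; gcongr
    _ = √B / p := by field_simp

lemma sum_sum_htWeight_mul_le [DecidableEq ι] (hB : 0 ≤ B) {Δ : ι → ι → ℝ} {R : ℝ}
    (hdiag : ∀ i ∈ U, Δ i i ≤ π i) (hrow : ∀ i ∈ U, ∑ j ∈ U.erase i, Δ i j ^ 2 ≤ R) :
    ∑ i ∈ U, ∑ j ∈ U, htWeight U y π i * htWeight U y π j * Δ i j ≤
      B / (#U * p) + B * √(R / #U) / p ^ 2 := by
  rw [sum_sum_eq_sum_add_sum_sum_erase]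
  gcongr ?_ + ?_
  · calc _ ≤ ∑ i ∈ U, htWeight U y π i ^ 2 * π i := by
          refine sum_le_sum fun i hi => ?_
          rw [← sq]
          exact mul_le_mul_of_nonneg_left (hdiag i hi) (sq_nonneg _)
      _ ≤ _ := sum_htWeight_sq_mul_le hp hπ hy
  · calc _ ≤ (∑ i ∈ U, |htWeight U y π i|) * (√(∑ j ∈ U, htWeight U y π j ^ 2) * √R) :=
          sum_sum_erase_mul_le _ _ hrow
      _ ≤ √B / p * (√(B / (#U * p ^ 2)) * √R) := by
          gcongr
          exacts [sum_abs_htWeight_le hp hπ hy, sum_htWeight_sq_le hp hπ hy]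
      _ = B * √(R / #U) / p ^ 2 := by
          rw [Real.sqrt_div' _ (by positivity), Real.sqrt_mul' _ (sq_nonneg p),
            Real.sqrt_sq hp.le, Real.sqrt_div' _ (by positivity)]
          conv_rhs => rw [← Real.mul_self_sqrt hB]
          ring

end HorvitzThompson

section Design

variable {Ω ι : Type*} [MeasurableSpace Ω] {μ : Measure Ω} [IsProbabilityMeasure μ] [DecidableEq ι]
  {U : Finset ι} {s : Ω → Finset ι} {y π : ι → ℝ}

lemma integral_sq_horvitzThompson_sub_mean (hs : ∀ i, MeasurableSet {ω | i ∈ s ω})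
    (hπ : ∀ i, π i = μ.real {ω | i ∈ s ω}) (hπ0 : ∀ i ∈ U, π i ≠ 0) :
    ∫ ω, ((#U : ℝ)⁻¹ * ∑ i ∈ U, y i * (if i ∈ s ω then 1 else 0) / π i -
        (#U : ℝ)⁻¹ * ∑ i ∈ U, y i) ^ 2 ∂μ =
      ∑ i ∈ U, ∑ j ∈ U, htWeight U y π i * htWeight U y π j *
        (μ.real {ω | i ∈ s ω ∧ j ∈ s ω} - π i * π j) := by
  simp_rw [horvitzThompson_sub_mean_eq hπ0, hπ]
  exact integral_sq_sum_indicator_sub U hs _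

lemma integral_sq_horvitzThompson_sub_mean_le {πij : ι → ι → ℝ} {p B R : ℝ}
    (hs : ∀ i, MeasurableSet {ω | i ∈ s ω}) (hπ : ∀ i, π i = μ.real {ω | i ∈ s ω})
    (hπij : ∀ i j, πij i j = μ.real {ω | i ∈ s ω ∧ j ∈ s ω})
    (hp : 0 < p) (hπp : ∀ i ∈ U, p ≤ π i) (hB : 0 ≤ B) (hy : ∑ i ∈ U, y i ^ 2 ≤ #U * B)
    (hrow : ∀ i ∈ U, ∑ j ∈ U.erase i, (πij i j - π i * π j) ^ 2 ≤ R) :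
    ∫ ω, ((#U : ℝ)⁻¹ * ∑ i ∈ U, y i * (if i ∈ s ω then 1 else 0) / π i -
        (#U : ℝ)⁻¹ * ∑ i ∈ U, y i) ^ 2 ∂μ ≤
      B / (#U * p) + B * √(R / #U) / p ^ 2 := by
  rw [integral_sq_horvitzThompson_sub_mean hs hπ fun i hi => (hp.trans_le (hπp i hi)).ne']
  simp_rw [← hπij]
  refine sum_sum_htWeight_mul_le hp hπp hy hB (fun i _ => ?_) hrow
  rw [hπij, hπ]
  simp only [and_self]
  exact sub_le_self _ (mul_self_nonneg _)

end Design

theorem stmt_0_general {Ω : Type*} [MeasurableSpace Ω] (μ : Measure Ω) [IsProbabilityMeasure μ]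
    (s : ℕ → Ω → Finset ℕ)
    (hmeas : ∀ N i j : ℕ, MeasurableSet {ω | i ∈ s N ω ∧ j ∈ s N ω})
    (y : ℕ → ℕ → ℝ) (π : ℕ → ℕ → ℝ) (πij : ℕ → ℕ → ℕ → ℝ)
    (hπ : ∀ N i, π N i = (μ {ω | i ∈ s N ω}).toReal)
    (hπij : ∀ N i j, πij N i j = (μ {ω | i ∈ s N ω ∧ j ∈ s N ω}).toReal)
    -- D4, first part: π_i ≥ π*_N > 0 and N π*_N → ∞
    (πstar : ℕ → ℝ) (hπstar_pos : ∀ N, 0 < πstar N)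
    (hπ_lb : ∀ N, ∀ i ∈ range N, πstar N ≤ π N i)
    (hNπstar : Tendsto (fun N : ℕ => (N : ℝ) * πstar N) atTop atTop)
    -- D4, second part: ∃ κ ≥ 0 with N^{1/2+κ} (π*_N)² → ∞ and
    -- max_i ∑_{j ≠ i} Δ_{ij}² = O(N^{-2κ})
    (κ : ℝ)
    (hrate : Tendsto (fun N : ℕ => (N : ℝ) ^ ((1 : ℝ) / 2 + κ) * (πstar N) ^ 2)
      atTop atTop)
    (hΔ : ∃ C : ℝ, ∀ᶠ N : ℕ in atTop, ∀ i ∈ range N,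
      ∑ j ∈ (range N).erase i, (πij N i j - π N i * π N j) ^ 2 ≤
        C * (N : ℝ) ^ (-(2 * κ)))
    -- D5: limsup N⁻¹ ∑ y_i² < ∞
    (hy : ∃ B : ℝ, ∀ᶠ N : ℕ in atTop, (N : ℝ)⁻¹ * ∑ i ∈ range N, (y N i) ^ 2 ≤ B) :
    Tendsto (fun N : ℕ => ∫ ω,
        ((N : ℝ)⁻¹ * ∑ i ∈ range N, y N i * (if i ∈ s N ω then 1 else 0) / π N i -
          (N : ℝ)⁻¹ * ∑ i ∈ range N, y N i) ^ 2 ∂μ)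
      atTop (nhds 0) := by
  obtain ⟨C, hC⟩ := hΔ
  obtain ⟨B, hB⟩ := hy
  have hB0 : 0 ≤ B := by
    obtain ⟨N, hN⟩ := hB.exists
    exact le_trans (by positivity) hN
  have hs (N i : ℕ) : MeasurableSet {ω | i ∈ s N ω} := by simpa using hmeas N i i
  have hbound : ∀ᶠ N : ℕ in atTop, ∫ ω,
      ((N : ℝ)⁻¹ * ∑ i ∈ range N, y N i * (if i ∈ s N ω then 1 else 0) / π N i -
        (N : ℝ)⁻¹ * ∑ i ∈ range N, y N i) ^ 2 ∂μ ≤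
      B / (N * πstar N) + B * √C / ((N : ℝ) ^ ((1 : ℝ) / 2 + κ) * πstar N ^ 2) := by
    filter_upwards [hC, hB, eventually_gt_atTop 0] with N hCN hBN hN
    have hN' : (0 : ℝ) < N := by exact_mod_cast hN
    have hy' : ∑ i ∈ range N, y N i ^ 2 ≤ #(range N) * B := by
      rw [card_range]; exact (inv_mul_le_iff₀ hN').1 hBN
    have := integral_sq_horvitzThompson_sub_mean_le (hs N) (hπ N) (hπij N) (hπstar_pos N)
      (hπ_lb N) hB0 hy' hCN
    rwa [card_range, Real.sqrt_mul_rpow_neg_div hN', mul_div_assoc', div_div] at this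
  have hlim : Tendsto (fun N : ℕ => B / (N * πstar N) +
      B * √C / ((N : ℝ) ^ ((1 : ℝ) / 2 + κ) * πstar N ^ 2)) atTop (nhds 0) := by
    simpa using (tendsto_const_nhds.div_atTop hNπstar).add (tendsto_const_nhds.div_atTop hrate)
  exact tendsto_of_tendsto_of_tendsto_of_le_of_le' tendsto_const_nhds hlim
    (Eventually.of_forall fun N => integral_nonneg fun ω => sq_nonneg _) hbound

/-- Lemma A.1: mean square consistency of the Horvitz–Thompson estimator
under design conditions D4 and D5. -/
theorem stmt_0 {Ω : Type*} [MeasurableSpace Ω] (μ : Measure Ω) [IsProbabilityMeasure μ]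
    (s : ℕ → Ω → Finset ℕ)
    (hmeas : ∀ N i j : ℕ, MeasurableSet {ω | i ∈ s N ω ∧ j ∈ s N ω})
    (y : ℕ → ℕ → ℝ) (π : ℕ → ℕ → ℝ) (πij : ℕ → ℕ → ℕ → ℝ)
    (hπ : ∀ N i, π N i = (μ {ω | i ∈ s N ω}).toReal)
    (hπij : ∀ N i j, πij N i j = (μ {ω | i ∈ s N ω ∧ j ∈ s N ω}).toReal)
    -- D4, first part: π_i ≥ π*_N > 0 and N π*_N → ∞
    (πstar : ℕ → ℝ) (hπstar_pos : ∀ N, 0 < πstar N)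
    (hπ_lb : ∀ N, ∀ i ∈ range N, πstar N ≤ π N i)
    (hNπstar : Tendsto (fun N : ℕ => (N : ℝ) * πstar N) atTop atTop)
    -- D4, second part: ∃ κ ≥ 0 with N^{1/2+κ} (π*_N)² → ∞ and
    -- max_i ∑_{j ≠ i} Δ_{ij}² = O(N^{-2κ})
    (κ : ℝ) (hκ : 0 ≤ κ)
    (hrate : Tendsto (fun N : ℕ => (N : ℝ) ^ ((1 : ℝ) / 2 + κ) * (πstar N) ^ 2)
      atTop atTop)
    (hΔ : ∃ C : ℝ, ∀ᶠ N : ℕ in atTop, ∀ i ∈ range N,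
      ∑ j ∈ (range N).erase i, (πij N i j - π N i * π N j) ^ 2 ≤
        C * (N : ℝ) ^ (-(2 * κ)))
    -- D5: limsup N⁻¹ ∑ y_i² < ∞
    (hy : ∃ B : ℝ, ∀ᶠ N : ℕ in atTop, (N : ℝ)⁻¹ * ∑ i ∈ range N, (y N i) ^ 2 ≤ B) :
    Tendsto (fun N : ℕ => ∫ ω,
        ((N : ℝ)⁻¹ * ∑ i ∈ range N, y N i * (if i ∈ s N ω then 1 else 0) / π N i -
          (N : ℝ)⁻¹ * ∑ i ∈ range N, y N i) ^ 2 ∂μ)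
      atTop (nhds 0) :=
  stmt_0_general μ s hmeas y π πij hπ hπij πstar hπstar_pos hπ_lb hNπstar κ hrate hΔ hy
end

section
/- In the setting of the previous context, with B_h, B_k disjoint or arbitrary measurable sets, define a_h = N^{−1}∑_{i=1}^N 1_{X_i∈B_h} − n^{−1}∑_{i∈s} 1_{X_i∈B_h} and b_k = N^{−1}∑_{i=1}^N y_i 1_{X_i∈B_k} − n^{−1}∑_{i∈s} y_i 1_{X_i∈B_k}. Then Cov(a_h, b_k) = (1/n)(1 − n/N)(E[y 1_{X∈B_h}] 1_{h=k} − Pr(X∈B_h) E[y 1_{X∈B_k}]). -/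
open MeasureTheory ProbabilityTheory Finset
open scoped Classical ENNReal

/-!
Write `Zᵢ = (Xᵢ, yᵢ)`, `f z = 1_{B_h}(z.1)` and `g z = z.2 1_{B_k}(z.1)`. On the event `s = t`
both `a` and `b` are fixed linear combinations `∑ wᵢ f(Zᵢ)` and `∑ wᵢ g(Zᵢ)` of the data with
weights `wᵢ = 1/N - 1_{i ∈ t}/n`; for every `t` of size `n` these weights sum to `0` and their
squares sum to `1/n - 1/N`. Since `s` is independent of the data, conditioning on `s = t` leaves
the i.i.d. structure intact, so `E[a | s = t] = (∑ wᵢ) E f(Z) = 0`, and in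
`E[ab | s = t] = ∑ᵢⱼ wᵢ wⱼ E[f(Zᵢ) g(Zⱼ)]` the off-diagonal terms contribute
`(∑ wᵢ)² E f(Z) E g(Z) = 0`, leaving `(∑ wᵢ²) (E[fg(Z)] - E f(Z) E g(Z))`. Finally `fg` is
`y 1_{B_h}` when `B_h = B_k` and `0` when they are disjoint.
-/

noncomputable def popMinusSampleMean (N n : ℕ) (t : Finset ℕ) (φ : ℕ → ℝ) : ℝ :=
  (N : ℝ)⁻¹ * ∑ i ∈ range N, φ i - (n : ℝ)⁻¹ * ∑ i ∈ t, φ i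

noncomputable def popMinusSampleWeight (N n : ℕ) (t : Finset ℕ) (i : ℕ) : ℝ :=
  (N : ℝ)⁻¹ - (n : ℝ)⁻¹ * if i ∈ t then 1 else 0

lemma popMinusSampleMean_eq_sum {N n : ℕ} {t : Finset ℕ} (ht : t ⊆ range N) (φ : ℕ → ℝ) :
    popMinusSampleMean N n t φ = ∑ i ∈ range N, popMinusSampleWeight N n t i * φ i := by
  have hmem : ∑ i ∈ range N, (if i ∈ t then φ i else 0) = ∑ i ∈ t, φ i := by
    rw [sum_ite_mem, inter_eq_right.mpr ht]
  simp only [popMinusSampleMean, popMinusSampleWeight, sub_mul, sum_sub_distrib, mul_sum, ← hmem]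
  congr 1
  refine sum_congr rfl fun i _ => ?_
  split_ifs <;> ring

lemma sum_popMinusSampleWeight {N n : ℕ} {t : Finset ℕ} (ht : t ⊆ range N) (hcard : t.card = n)
    (hn : n ≠ 0) : ∑ i ∈ range N, popMinusSampleWeight N n t i = 0 := by
  have hnN : n ≤ N := by simpa [hcard] using card_le_card ht
  have hN : (N : ℝ) ≠ 0 := by exact_mod_cast (by omega : N ≠ 0)
  simpa [popMinusSampleMean, hcard, hn, hN] using (popMinusSampleMean_eq_sum (n := n) ht 1).symm

lemma sum_popMinusSampleWeight_sq {N n : ℕ} {t : Finset ℕ} (ht : t ⊆ range N)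
    (hcard : t.card = n) (hn : n ≠ 0) :
    ∑ i ∈ range N, popMinusSampleWeight N n t i ^ 2 = (n : ℝ)⁻¹ - (N : ℝ)⁻¹ := by
  have hsample : ∀ i ∈ t, popMinusSampleWeight N n t i = (N : ℝ)⁻¹ - (n : ℝ)⁻¹ := by
    intro i hi
    simp [popMinusSampleWeight, hi]
  -- `∑ wᵢ² = popMinusSampleMean t w`, and `w` is constant on the sample `t`.
  simp only [sq, ← popMinusSampleMean_eq_sum ht, popMinusSampleMean,
    sum_popMinusSampleWeight ht hcard hn, sum_congr rfl hsample, sum_const, hcard, nsmul_eq_mul]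
  field_simp
  ring

lemma sum_sum_mul_mul_add_ite_eq {ι : Type*} [DecidableEq ι] {I : Finset ι} {w : ι → ℝ}
    (hw : ∑ i ∈ I, w i = 0) (a b : ℝ) :
    ∑ i ∈ I, ∑ j ∈ I, w i * w j * (a + if i = j then b else 0) = (∑ i ∈ I, w i ^ 2) * b := by
  simp only [mul_add, sum_add_distrib, mul_ite, mul_zero, sum_ite_eq, ← sum_mul, ← mul_sum, hw]
  simp [sq, sum_mul]

lemma sum_mul_mul_sum_mul {ι : Type*} (I : Finset ι) (w u v : ι → ℝ) :
    (∑ i ∈ I, w i * u i) * (∑ j ∈ I, w j * v j) =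
      ∑ i ∈ I, ∑ j ∈ I, w i * w j * (u i * v j) := by
  rw [sum_mul_sum]
  exact sum_congr rfl fun i _ => sum_congr rfl fun j _ => by ring

section Superpopulation

variable {Ω γ : Type*} [MeasurableSpace Ω] [MeasurableSpace γ] {μ : Measure Ω}

lemma setIntegral_comp_eq_measureReal_mul {Z : Ω → γ} (hZ : Measurable Z) {E : Set Ω}
    (hind : ∀ A, MeasurableSet A → μ (E ∩ Z ⁻¹' A) = μ E * μ (Z ⁻¹' A))
    {G : γ → ℝ} (hG : Measurable G) :
    ∫ ω in E, G (Z ω) ∂μ = μ.real E * ∫ ω, G (Z ω) ∂μ := by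
  have hmap : (μ.restrict E).map Z = μ E • μ.map Z := by
    ext A hA
    rw [Measure.map_apply hZ hA, Measure.restrict_apply (hZ hA), Set.inter_comm,
      hind A hA, Measure.smul_apply, Measure.map_apply hZ hA, smul_eq_mul]
  rw [← integral_map hZ.aemeasurable hG.aestronglyMeasurable, hmap, integral_smul_measure,
    integral_map hZ.aemeasurable hG.aestronglyMeasurable, smul_eq_mul, measureReal_def]

lemma integral_eq_of_eq_comp_of_indep [IsProbabilityMeasure μ] {β : Type*} {s : Ω → β}
    {T : Finset β} (hsT : ∀ ω, s ω ∈ T) (hs : ∀ t, MeasurableSet {ω | s ω = t})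
    {Z : Ω → γ} (hZ : Measurable Z)
    (hind : ∀ t A, MeasurableSet A →
      μ ({ω | s ω = t} ∩ Z ⁻¹' A) = μ {ω | s ω = t} * μ (Z ⁻¹' A))
    {F : Ω → ℝ} {G : β → γ → ℝ} (hF : ∀ ω, F ω = G (s ω) (Z ω))
    (hG : ∀ t ∈ T, Measurable (G t)) (hGi : ∀ t ∈ T, Integrable (fun ω => G t (Z ω)) μ)
    {C : ℝ} (hC : ∀ t ∈ T, ∫ ω, G t (Z ω) ∂μ = C) :
    ∫ ω, F ω ∂μ = C := by
  have hcover : ⋃ t ∈ T, {ω | s ω = t} = Set.univ :=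
    Set.eq_univ_of_forall fun ω => Set.mem_biUnion (hsT ω) rfl
  have hdisj : (T : Set β).PairwiseDisjoint fun t => {ω | s ω = t} :=
    fun t _ t' _ hne => Set.disjoint_left.mpr fun ω h h' => hne (h.symm.trans h')
  have hsplit : ∀ H : Ω → ℝ, Integrable H μ →
      ∫ ω, H ω ∂μ = ∑ t ∈ T, ∫ ω in {ω | s ω = t}, H ω ∂μ := fun H hH => by
    rw [← setIntegral_univ, ← hcover,
      integral_biUnion_finset T (fun t _ => hs t) hdisj fun t _ => hH.integrableOn]
  have hFi : Integrable F μ := by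
    rw [← integrableOn_univ, ← hcover]
    exact integrableOn_finset_iUnion.mpr fun t ht =>
      (hGi t ht).integrableOn.congr_fun (fun ω hω => by rw [hF ω, show s ω = t from hω]) (hs t)
  have hmass : ∑ t ∈ T, μ.real {ω | s ω = t} = 1 := by
    simpa using (hsplit 1 (integrable_const 1)).symm
  calc ∫ ω, F ω ∂μ = ∑ t ∈ T, ∫ ω in {ω | s ω = t}, G t (Z ω) ∂μ :=
        (hsplit F hFi).trans <| sum_congr rfl fun t _ =>
          setIntegral_congr_fun (hs t) fun ω hω => by rw [hF ω, show s ω = t from hω]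
    _ = ∑ t ∈ T, μ.real {ω | s ω = t} * C := sum_congr rfl fun t ht => by
        rw [setIntegral_comp_eq_measureReal_mul hZ (hind t) (hG t ht), hC t ht]
    _ = C := by rw [← sum_mul, hmass, one_mul]

lemma integrable_mul_comp_of_iid {Z : ℕ → Ω → γ}
    (hiid : iIndepFun Z μ) (hident : ∀ i, IdentDistrib (Z i) (Z 0) μ μ)
    {f g : γ → ℝ} (hf : Measurable f) (hg : Measurable g)
    (hfi : Integrable (fun ω => f (Z 0 ω)) μ) (hgi : Integrable (fun ω => g (Z 0 ω)) μ)
    (hfgi : Integrable (fun ω => f (Z 0 ω) * g (Z 0 ω)) μ) (i j : ℕ) :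
    Integrable (fun ω => f (Z i ω) * g (Z j ω)) μ := by
  rcases eq_or_ne i j with rfl | hij
  · exact ((hident i).comp (hf.mul hg)).integrable_iff.mpr hfgi
  · exact ((hiid.indepFun hij).comp hf hg).integrable_mul
      (((hident i).comp hf).integrable_iff.mpr hfi) (((hident j).comp hg).integrable_iff.mpr hgi)

lemma integral_mul_comp_of_iid {Z : ℕ → Ω → γ}
    (hiid : iIndepFun Z μ) (hident : ∀ i, IdentDistrib (Z i) (Z 0) μ μ)
    {f g : γ → ℝ} (hf : Measurable f) (hg : Measurable g) (i j : ℕ) :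
    ∫ ω, f (Z i ω) * g (Z j ω) ∂μ = (∫ ω, f (Z 0 ω) ∂μ) * (∫ ω, g (Z 0 ω) ∂μ) +
      if i = j then ∫ ω, f (Z 0 ω) * g (Z 0 ω) ∂μ - (∫ ω, f (Z 0 ω) ∂μ) * ∫ ω, g (Z 0 ω) ∂μ
      else 0 := by
  rcases eq_or_ne i j with rfl | hij
  · rw [if_pos rfl, add_sub_cancel]
    exact ((hident i).comp (hf.mul hg)).integral_eq
  · rw [if_neg hij, add_zero]
    exact (((hiid.indepFun hij).comp hf hg).integral_mul_eq_mul_integral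
      ((hident i).comp hf).aemeasurable_fst.aestronglyMeasurable
      ((hident j).comp hg).aemeasurable_fst.aestronglyMeasurable).trans
      (congrArg₂ (· * ·) ((hident i).comp hf).integral_eq ((hident j).comp hg).integral_eq)

lemma integral_sum_mul_comp_of_identDistrib {Z : ℕ → Ω → γ}
    (hident : ∀ i, IdentDistrib (Z i) (Z 0) μ μ) {f : γ → ℝ} (hf : Measurable f)
    (hfi : Integrable (fun ω => f (Z 0 ω)) μ) (I : Finset ℕ) (w : ℕ → ℝ) :
    ∫ ω, ∑ i ∈ I, w i * f (Z i ω) ∂μ = (∑ i ∈ I, w i) * ∫ ω, f (Z 0 ω) ∂μ := by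
  have hident_f i : IdentDistrib (fun ω => f (Z i ω)) (fun ω => f (Z 0 ω)) μ μ :=
    (hident i).comp hf
  rw [integral_finsetSum _ fun i _ => ((hident_f i).integrable_iff.mpr hfi).const_mul _, sum_mul]
  exact sum_congr rfl fun i _ => by rw [integral_const_mul, (hident_f i).integral_eq]

lemma integrable_sum_mul_sum_comp_of_iid {Z : ℕ → Ω → γ}
    (hiid : iIndepFun Z μ) (hident : ∀ i, IdentDistrib (Z i) (Z 0) μ μ)
    {f g : γ → ℝ} (hf : Measurable f) (hg : Measurable g)
    (hfi : Integrable (fun ω => f (Z 0 ω)) μ) (hgi : Integrable (fun ω => g (Z 0 ω)) μ)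
    (hfgi : Integrable (fun ω => f (Z 0 ω) * g (Z 0 ω)) μ) (I : Finset ℕ) (w : ℕ → ℝ) :
    Integrable (fun ω => (∑ i ∈ I, w i * f (Z i ω)) * (∑ j ∈ I, w j * g (Z j ω))) μ := by
  simp only [sum_mul_mul_sum_mul]
  exact integrable_finsetSum _ fun i _ => integrable_finsetSum _ fun j _ =>
    (integrable_mul_comp_of_iid hiid hident hf hg hfi hgi hfgi i j).const_mul (w i * w j)

lemma integral_sum_mul_sum_comp_of_iid {Z : ℕ → Ω → γ}
    (hiid : iIndepFun Z μ) (hident : ∀ i, IdentDistrib (Z i) (Z 0) μ μ)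
    {f g : γ → ℝ} (hf : Measurable f) (hg : Measurable g)
    (hfi : Integrable (fun ω => f (Z 0 ω)) μ) (hgi : Integrable (fun ω => g (Z 0 ω)) μ)
    (hfgi : Integrable (fun ω => f (Z 0 ω) * g (Z 0 ω)) μ) {I : Finset ℕ} {w : ℕ → ℝ}
    (hw : ∑ i ∈ I, w i = 0) :
    ∫ ω, (∑ i ∈ I, w i * f (Z i ω)) * (∑ j ∈ I, w j * g (Z j ω)) ∂μ =
      (∑ i ∈ I, w i ^ 2) *
        (∫ ω, f (Z 0 ω) * g (Z 0 ω) ∂μ - (∫ ω, f (Z 0 ω) ∂μ) * ∫ ω, g (Z 0 ω) ∂μ) := by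
  have hint := integrable_mul_comp_of_iid hiid hident hf hg hfi hgi hfgi
  simp only [sum_mul_mul_sum_mul]
  rw [integral_finsetSum _ fun i _ => integrable_finsetSum _ fun j _ => (hint i j).const_mul _]
  simp_rw [integral_finsetSum _ fun j _ => (hint _ j).const_mul _, integral_const_mul]
  rw [← sum_sum_mul_mul_add_ite_eq hw]
  exact sum_congr rfl fun i _ => sum_congr rfl fun j _ => by
    rw [integral_mul_comp_of_iid hiid hident hf hg]

theorem integral_popMinusSampleMean_comp [IsProbabilityMeasure μ] {Z : ℕ → Ω → γ}
    (hZ : ∀ i, Measurable (Z i)) (hident : ∀ i, IdentDistrib (Z i) (Z 0) μ μ)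
    {N n : ℕ} (hn : n ≠ 0) {s : Ω → Finset ℕ} (hs : ∀ t, MeasurableSet {ω | s ω = t})
    (hvalid : ∀ ω, s ω ⊆ range N ∧ (s ω).card = n)
    (hind : ∀ (t : Finset ℕ) (A : Set (ℕ → γ)), MeasurableSet A →
      μ ({ω | s ω = t} ∩ {ω | (fun i => Z i ω) ∈ A}) =
        μ {ω | s ω = t} * μ {ω | (fun i => Z i ω) ∈ A})
    {f : γ → ℝ} (hf : Measurable f) (hfi : Integrable (fun ω => f (Z 0 ω)) μ) :
    ∫ ω, popMinusSampleMean N n (s ω) (fun i => f (Z i ω)) ∂μ = 0 := by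
  refine integral_eq_of_eq_comp_of_indep (fun ω => mem_powersetCard.mpr (hvalid ω)) hs
    (measurable_pi_lambda _ hZ) hind
    (G := fun t x => ∑ i ∈ range N, popMinusSampleWeight N n t i * f (x i))
    (fun ω => popMinusSampleMean_eq_sum (hvalid ω).1 _) (fun t _ => by fun_prop)
    (fun t _ => integrable_finsetSum _ fun i _ =>
      (((hident i).comp hf).integrable_iff.mpr hfi).const_mul _) fun t ht => ?_
  obtain ⟨hsub, hcard⟩ := mem_powersetCard.mp ht
  rw [integral_sum_mul_comp_of_identDistrib hident hf hfi, sum_popMinusSampleWeight hsub hcard hn,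
    zero_mul]

theorem integral_popMinusSampleMean_comp_mul [IsProbabilityMeasure μ] {Z : ℕ → Ω → γ}
    (hZ : ∀ i, Measurable (Z i)) (hiid : iIndepFun Z μ)
    (hident : ∀ i, IdentDistrib (Z i) (Z 0) μ μ)
    {N n : ℕ} (hn : n ≠ 0) {s : Ω → Finset ℕ} (hs : ∀ t, MeasurableSet {ω | s ω = t})
    (hvalid : ∀ ω, s ω ⊆ range N ∧ (s ω).card = n)
    (hind : ∀ (t : Finset ℕ) (A : Set (ℕ → γ)), MeasurableSet A →
      μ ({ω | s ω = t} ∩ {ω | (fun i => Z i ω) ∈ A}) =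
        μ {ω | s ω = t} * μ {ω | (fun i => Z i ω) ∈ A})
    {f g : γ → ℝ} (hf : Measurable f) (hg : Measurable g)
    (hfi : Integrable (fun ω => f (Z 0 ω)) μ) (hgi : Integrable (fun ω => g (Z 0 ω)) μ)
    (hfgi : Integrable (fun ω => f (Z 0 ω) * g (Z 0 ω)) μ) :
    ∫ ω, popMinusSampleMean N n (s ω) (fun i => f (Z i ω)) *
        popMinusSampleMean N n (s ω) (fun i => g (Z i ω)) ∂μ =
      ((n : ℝ)⁻¹ - (N : ℝ)⁻¹) *
        (∫ ω, f (Z 0 ω) * g (Z 0 ω) ∂μ - (∫ ω, f (Z 0 ω) ∂μ) * ∫ ω, g (Z 0 ω) ∂μ) := by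
  refine integral_eq_of_eq_comp_of_indep (fun ω => mem_powersetCard.mpr (hvalid ω)) hs
    (measurable_pi_lambda _ hZ) hind
    (G := fun t x => (∑ i ∈ range N, popMinusSampleWeight N n t i * f (x i)) *
      ∑ j ∈ range N, popMinusSampleWeight N n t j * g (x j))
    (fun ω => by simp only [popMinusSampleMean_eq_sum (hvalid ω).1])
    (fun t _ => by fun_prop)
    (fun t _ => integrable_sum_mul_sum_comp_of_iid hiid hident hf hg hfi hgi hfgi _ _)
    fun t ht => ?_
  obtain ⟨hsub, hcard⟩ := mem_powersetCard.mp ht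
  rw [integral_sum_mul_sum_comp_of_iid hiid hident hf hg hfi hgi hfgi
    (sum_popMinusSampleWeight hsub hcard hn), sum_popMinusSampleWeight_sq hsub hcard hn]

end Superpopulation

lemma integral_ite_mem_mul_mul_ite_mem {Ω α : Type*} [MeasurableSpace Ω] {μ : Measure Ω}
    {B B' : Set α} (hB : B = B' ∨ Disjoint B B') (x : Ω → α) (r : Ω → ℝ) :
    ∫ ω, (if x ω ∈ B then 1 else 0) * (r ω * if x ω ∈ B' then 1 else 0) ∂μ =
      if B = B' then ∫ ω, r ω * (if x ω ∈ B then 1 else 0) ∂μ else 0 := by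
  by_cases hBB' : B = B'
  · subst hBB'
    rw [if_pos rfl]
    congr with ω
    split_ifs <;> ring
  · rw [if_neg hBB', ← integral_zero Ω ℝ]
    congr with ω
    have hx : x ω ∈ B → x ω ∉ B' := fun h => Set.disjoint_left.mp (hB.resolve_left hBB') h
    split_ifs <;> simp_all

lemma integrable_ite_one_zero_mul {Ω : Type*} [MeasurableSpace Ω] {μ : Measure Ω}
    {p : Ω → Prop} (hp : MeasurableSet {ω | p ω}) {r : Ω → ℝ} (hr : Integrable r μ) :
    Integrable (fun ω => (if p ω then (1 : ℝ) else 0) * r ω) μ :=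
  hr.mono ((Measurable.ite hp measurable_const measurable_const).aestronglyMeasurable.mul hr.1)
    (ae_of_all _ fun ω => by split_ifs <;> simp)

lemma integral_ite_one_zero {Ω : Type*} [MeasurableSpace Ω] {μ : Measure Ω} {p : Ω → Prop}
    (hp : MeasurableSet {ω | p ω}) : ∫ ω, (if p ω then (1 : ℝ) else 0) ∂μ = μ.real {ω | p ω} := by
  rw [← integral_indicator_one hp]
  rfl

theorem stmt_8_general {Ω α : Type*} [MeasurableSpace Ω] [MeasurableSpace α]
    (μ : Measure Ω) [IsProbabilityMeasure μ]
    (N n : ℕ) (hn : 1 ≤ n)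
    (X : ℕ → Ω → α) (y : ℕ → Ω → ℝ)
    (hZmeas : ∀ i, Measurable (fun ω => (X i ω, y i ω)))
    (hiid : iIndepFun
      (fun i ω => (X i ω, y i ω)) μ)
    (hident : ∀ i, Measure.map (fun ω => (X i ω, y i ω)) μ =
      Measure.map (fun ω => (X 0 ω, y 0 ω)) μ)
    (hy2 : MemLp (y 0) 2 μ)
    (s : Ω → Finset ℕ) (hsmeas : ∀ t : Finset ℕ, MeasurableSet {ω | s ω = t})
    (hvalid : ∀ ω, s ω ⊆ range N ∧ (s ω).card = n)
    (hindep : ∀ (t : Finset ℕ) (A : Set (ℕ → α × ℝ)), MeasurableSet A →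
      μ ({ω | s ω = t} ∩ {ω | (fun i => (X i ω, y i ω)) ∈ A}) =
        μ {ω | s ω = t} * μ {ω | (fun i => (X i ω, y i ω)) ∈ A})
    (Bh Bk : Set α) (hBh : MeasurableSet Bh) (hBk : MeasurableSet Bk)
    (hdisj : Bh = Bk ∨ Disjoint Bh Bk)
    (a b : Ω → ℝ)
    (ha : ∀ ω, a ω =
      (N : ℝ)⁻¹ * ∑ i ∈ range N, (if X i ω ∈ Bh then (1 : ℝ) else 0) -
        (n : ℝ)⁻¹ * ∑ i ∈ s ω, (if X i ω ∈ Bh then (1 : ℝ) else 0))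
    (hb : ∀ ω, b ω =
      (N : ℝ)⁻¹ * ∑ i ∈ range N, y i ω * (if X i ω ∈ Bk then (1 : ℝ) else 0) -
        (n : ℝ)⁻¹ * ∑ i ∈ s ω, y i ω * (if X i ω ∈ Bk then (1 : ℝ) else 0)) :
    (∫ ω, a ω * b ω ∂μ) - (∫ ω, a ω ∂μ) * (∫ ω, b ω ∂μ) =
      (1 / n) * (1 - (n : ℝ) / N) *
        ((if Bh = Bk then ∫ ω, y 0 ω * (if X 0 ω ∈ Bh then (1 : ℝ) else 0) ∂μ
            else 0) -
          (μ {ω | X 0 ω ∈ Bh}).toReal *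
            ∫ ω, y 0 ω * (if X 0 ω ∈ Bk then (1 : ℝ) else 0) ∂μ) := by
  have hidentZ i : IdentDistrib (fun ω => (X i ω, y i ω)) (fun ω => (X 0 ω, y 0 ω)) μ μ :=
    ⟨(hZmeas i).aemeasurable, (hZmeas 0).aemeasurable, hident i⟩
  have hf : Measurable fun z : α × ℝ => if z.1 ∈ Bh then (1 : ℝ) else 0 :=
    Measurable.ite (measurable_fst hBh) measurable_const measurable_const
  have hg : Measurable fun z : α × ℝ => z.2 * if z.1 ∈ Bk then (1 : ℝ) else 0 :=
    measurable_snd.mul (Measurable.ite (measurable_fst hBk) measurable_const measurable_const)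
  have hX0 : Measurable (X 0) := (hZmeas 0).fst
  have hfi : Integrable (fun ω => if X 0 ω ∈ Bh then (1 : ℝ) else 0) μ := by
    simpa using integrable_ite_one_zero_mul (hX0 hBh) (integrable_const 1)
  have hgi : Integrable (fun ω => y 0 ω * if X 0 ω ∈ Bk then (1 : ℝ) else 0) μ := by
    simpa only [mul_comm] using integrable_ite_one_zero_mul (hX0 hBk) (hy2.integrable one_le_two)
  have hab := integral_popMinusSampleMean_comp_mul hZmeas hiid hidentZ (by omega) hsmeas hvalid
    hindep hf hg hfi hgi (integrable_ite_one_zero_mul (hX0 hBh) hgi)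
  have ha0 := integral_popMinusSampleMean_comp hZmeas hidentZ (by omega) hsmeas hvalid hindep hf hfi
  dsimp only at hab ha0
  have ha' : a = fun ω => popMinusSampleMean N n (s ω) fun i => if X i ω ∈ Bh then 1 else 0 :=
    funext ha
  have hb' : b = fun ω =>
      popMinusSampleMean N n (s ω) fun i => y i ω * if X i ω ∈ Bk then 1 else 0 := funext hb
  simp only [ha', hb']
  rw [hab, ha0, integral_ite_one_zero (hX0 hBh), integral_ite_mem_mul_mul_ite_mem hdisj,
    measureReal_def]
  field_simp
  ring

/-- Superpopulation + SRSWOR covariance computation: with i.i.d. pairs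
`(X_i, y_i)`, `E[y²] < ∞`, and a simple random sample `s` of size `n` drawn
independently of the data, the covariance between the population-minus-sample
proportion `a_h` of `{X ∈ B_h}` and the population-minus-sample mean `b_k` of
`y 1_{X ∈ B_k}` equals
`(1/n)(1 - n/N)(E[y 1_{X∈B_h}] 1_{B_h = B_k} - Pr(X∈B_h) E[y 1_{X∈B_k}])`. -/
theorem stmt_8 {Ω α : Type*} [MeasurableSpace Ω] [MeasurableSpace α]
    (μ : Measure Ω) [IsProbabilityMeasure μ]
    (N n : ℕ) (hn : 1 ≤ n) (hnN : n ≤ N)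
    (X : ℕ → Ω → α) (y : ℕ → Ω → ℝ)
    (hZmeas : ∀ i, Measurable (fun ω => (X i ω, y i ω)))
    (hiid : iIndepFun
      (fun i ω => (X i ω, y i ω)) μ)
    (hident : ∀ i, Measure.map (fun ω => (X i ω, y i ω)) μ =
      Measure.map (fun ω => (X 0 ω, y 0 ω)) μ)
    (hy2 : MemLp (y 0) 2 μ)
    (s : Ω → Finset ℕ) (hsmeas : ∀ t : Finset ℕ, MeasurableSet {ω | s ω = t})
    (hunif : ∀ t : Finset ℕ, t ⊆ range N → t.card = n →
      μ {ω | s ω = t} = ((N.choose n : ℝ≥0∞))⁻¹)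
    (hvalid : ∀ ω, s ω ⊆ range N ∧ (s ω).card = n)
    (hindep : ∀ (t : Finset ℕ) (A : Set (ℕ → α × ℝ)), MeasurableSet A →
      μ ({ω | s ω = t} ∩ {ω | (fun i => (X i ω, y i ω)) ∈ A}) =
        μ {ω | s ω = t} * μ {ω | (fun i => (X i ω, y i ω)) ∈ A})
    (Bh Bk : Set α) (hBh : MeasurableSet Bh) (hBk : MeasurableSet Bk)
    (hdisj : Bh = Bk ∨ Disjoint Bh Bk)
    (a b : Ω → ℝ)
    (ha : ∀ ω, a ω =
      (N : ℝ)⁻¹ * ∑ i ∈ range N, (if X i ω ∈ Bh then (1 : ℝ) else 0) -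
        (n : ℝ)⁻¹ * ∑ i ∈ s ω, (if X i ω ∈ Bh then (1 : ℝ) else 0))
    (hb : ∀ ω, b ω =
      (N : ℝ)⁻¹ * ∑ i ∈ range N, y i ω * (if X i ω ∈ Bk then (1 : ℝ) else 0) -
        (n : ℝ)⁻¹ * ∑ i ∈ s ω, y i ω * (if X i ω ∈ Bk then (1 : ℝ) else 0)) :
    (∫ ω, a ω * b ω ∂μ) - (∫ ω, a ω ∂μ) * (∫ ω, b ω ∂μ) =
      (1 / n) * (1 - (n : ℝ) / N) *
        ((if Bh = Bk then ∫ ω, y 0 ω * (if X 0 ω ∈ Bh then (1 : ℝ) else 0) ∂μ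
            else 0) -
          (μ {ω | X 0 ω ∈ Bh}).toReal *
            ∫ ω, y 0 ω * (if X 0 ω ∈ Bk then (1 : ℝ) else 0) ∂μ) :=
  stmt_8_general μ N n hn X y hZmeas hiid hident hy2 s hsmeas hvalid hindep Bh Bk hBh hBk hdisj a b
    ha hb
end
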